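/- Let k ∈ {−1,0,1}, ε, n ∈ {0,1} with εn = εk = 0, and let a, b : ℝ → (0,∞) be C¹. Define N(t,x,y) = n·a(t)²(F(y,k)+k)² + b(t)² e^{2εx} Σ(y,k)². Then for every fixed (t,x), the regularity quotient tends to 1 on the axis: lim_{y→0⁺} [−(∂N/∂t)² + a(t)^{−2}(∂N/∂x)² + b(t)^{−2}e^{−2εx}(∂N/∂y)²] / (4 N(t,x,y)) = 1. -/

import Mathlib

/-
Near the axis `Σ(y,k) ~ y`, while `F(y,k) + k` vanishes to second order because `F' = Σ` and
`F(0,k) + k = 0`. Hence `N = b²e^{2εx} Σ² (1 + o(1))`, the `y`-derivative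
`∂_y N = 2Σ (n a² (F + k) + b²e^{2εx} Σ')` contributes `Σ'² → 1` to the
quotient, while the `t`- and `x`-derivatives are `O(Σ²)` and contribute only terms that
vanish with `Σ²`.
-/

/-- `Σ(y,k)` -/
noncomputable def Sig (k y : ℝ) : ℝ :=
  if k = 1 then Real.sin y else if k = 0 then y else Real.sinh y

/-- `F(y,k)` -/
noncomputable def Ffun (k y : ℝ) : ℝ :=
  if k = 1 then -Real.cos y else if k = 0 then y ^ 2 / 2 else Real.cosh y

/-- Squared norm `N = η₁·η₁ = n a(t)²(F(y,k)+k)² + b(t)² e^{2εx} Σ(y,k)²` of the axial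
Killing vector `η₁ = ∂_w + nk∂_x` of the compact LRS metric. -/
noncomputable def Nsq (k ε n : ℝ) (a b : ℝ → ℝ) (t x y : ℝ) : ℝ :=
  n * (a t) ^ 2 * (Ffun k y + k) ^ 2 +
    (b t) ^ 2 * Real.exp (2 * ε * x) * (Sig k y) ^ 2

open Filter Real Topology

noncomputable def SigDeriv (k y : ℝ) : ℝ :=
  if k = 1 then cos y else if k = 0 then 1 else cosh y

lemma hasDerivAt_Sig (k y : ℝ) : HasDerivAt (Sig k) (SigDeriv k y) y := by
  unfold Sig SigDeriv
  by_cases h1 : k = 1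
  · simpa [h1] using hasDerivAt_sin y
  by_cases h0 : k = 0
  · simpa [h0] using hasDerivAt_id' y
  · simpa [h1, h0] using hasDerivAt_sinh y

lemma hasDerivAt_Ffun (k y : ℝ) : HasDerivAt (Ffun k) (Sig k y) y := by
  unfold Ffun Sig
  by_cases h1 : k = 1
  · simpa [h1] using (hasDerivAt_cos y).fun_neg
  by_cases h0 : k = 0
  · simpa [h0] using (hasDerivAt_pow 2 y).div_const 2
  · simpa [h1, h0] using hasDerivAt_cosh y

lemma continuous_SigDeriv (k : ℝ) : Continuous (SigDeriv k) := by
  unfold SigDeriv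
  by_cases h1 : k = 1
  · simpa [h1] using continuous_cos
  by_cases h0 : k = 0
  · simpa [h0] using continuous_const
  · simpa [h1, h0] using continuous_cosh

lemma Sig_zero (k : ℝ) : Sig k 0 = 0 := by
  simp [Sig]

lemma SigDeriv_zero (k : ℝ) : SigDeriv k 0 = 1 := by
  simp [SigDeriv]

lemma Ffun_zero_add_eq_zero {k : ℝ} (hk : k = -1 ∨ k = 0 ∨ k = 1) : Ffun k 0 + k = 0 := by
  rcases hk with rfl | rfl | rfl <;> norm_num [Ffun]

lemma tendsto_div_nhdsNE_of_hasDerivAt {f g : ℝ → ℝ} {f' g' x : ℝ} (hf : HasDerivAt f f' x)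
    (hg : HasDerivAt g g' x) (hfx : f x = 0) (hgx : g x = 0) (hg' : g' ≠ 0) :
    Tendsto (fun y => f y / g y) (𝓝[≠] x) (𝓝 (f' / g')) := by
  refine ((hasDerivAt_iff_tendsto_slope.mp hf).div
    (hasDerivAt_iff_tendsto_slope.mp hg) hg').congr' ?_
  filter_upwards [self_mem_nhdsWithin] with y hy
  rw [Pi.div_apply, slope_def_field, slope_def_field, hfx, hgx, sub_zero, sub_zero,
    div_div_div_cancel_right₀ (sub_ne_zero.mpr hy)]

lemma tendsto_regularity_quotient {l : Filter ℝ} (p p' q q' u w : ℝ) (hq : q ≠ 0)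
    {S C G : ℝ → ℝ} (hS : Tendsto S l (𝓝 0)) (hC : Tendsto C l (𝓝 1))
    (hGS : Tendsto (fun y => G y / S y) l (𝓝 0)) (hS0 : ∀ᶠ y in l, S y ≠ 0) :
    Tendsto (fun y =>
      (-(p' * G y ^ 2 + q' * S y ^ 2) ^ 2 + (u * S y ^ 2) ^ 2 / w
        + (2 * p * G y * S y + 2 * q * S y * C y) ^ 2 / q) / (4 * (p * G y ^ 2 + q * S y ^ 2)))
      l (𝓝 1) := by
  -- the quotient with `G = r S` substituted and `S²` cancelled
  set Φ : ℝ × ℝ × ℝ → ℝ := fun v =>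
    (-(v.1 ^ 2 * (p' * v.2.2 ^ 2 + q') ^ 2) + u ^ 2 * v.1 ^ 2 / w
      + 4 * (p * v.2.2 * v.1 + q * v.2.1) ^ 2 / q) / (4 * (p * v.2.2 ^ 2 + q)) with hΦ
  have hΦc : ContinuousAt Φ (0, 1, 0) := by
    refine ContinuousAt.div (by fun_prop) (by fun_prop) ?_
    simpa using hq
  have hΦ1 : Φ (0, 1, 0) = 1 := by
    norm_num [hΦ]
    field_simp
  have hlim := hΦc.tendsto.comp (hS.prodMk_nhds (hC.prodMk_nhds hGS))
  rw [hΦ1] at hlim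
  refine hlim.congr' ?_
  filter_upwards [hS0] with y hy
  obtain ⟨r, hr⟩ : ∃ r, G y = r * S y := ⟨G y / S y, (div_mul_cancel₀ _ hy).symm⟩
  simp only [Function.comp, hΦ, hr, mul_div_cancel_right₀ _ hy]
  rw [← mul_div_mul_left _ _ (pow_ne_zero 2 hy)]
  congr 1 <;> ring

section Derivatives

variable (k ε n : ℝ) (a b : ℝ → ℝ)

lemma hasDerivAt_Nsq_t {t a' b' : ℝ} (ha : HasDerivAt a a' t) (hb : HasDerivAt b b' t)
    (x y : ℝ) :
    HasDerivAt (fun s => Nsq k ε n a b s x y)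
      (2 * n * a t * a' * (Ffun k y + k) ^ 2 + 2 * b t * b' * exp (2 * ε * x) * Sig k y ^ 2) t :=
  ((((ha.pow 2).const_mul n).mul_const ((Ffun k y + k) ^ 2)).add
    (((hb.pow 2).mul_const (exp (2 * ε * x))).mul_const (Sig k y ^ 2))).congr_deriv
    (by push_cast; ring)

lemma hasDerivAt_Nsq_x (t x y : ℝ) :
    HasDerivAt (fun s => Nsq k ε n a b t s y)
      (2 * ε * (b t ^ 2 * exp (2 * ε * x)) * Sig k y ^ 2) x :=
  (((((hasDerivAt_id' x).const_mul (2 * ε)).exp.const_mul (b t ^ 2)).mul_const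
    (Sig k y ^ 2)).const_add (n * a t ^ 2 * (Ffun k y + k) ^ 2)).congr_deriv (by ring)

lemma hasDerivAt_Nsq_y (t x y : ℝ) :
    HasDerivAt (fun s => Nsq k ε n a b t x s)
      (2 * (n * a t ^ 2) * (Ffun k y + k) * Sig k y
        + 2 * (b t ^ 2 * exp (2 * ε * x)) * Sig k y * SigDeriv k y) y :=
  (((((hasDerivAt_Ffun k y).add_const k).pow 2).const_mul (n * a t ^ 2)).add
    (((hasDerivAt_Sig k y).pow 2).const_mul (b t ^ 2 * exp (2 * ε * x)))).congr_deriv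
    (by push_cast; ring)

end Derivatives

theorem axis_regularity_general (k ε n : ℝ)
    (hk : k = -1 ∨ k = 0 ∨ k = 1)
    (a b : ℝ → ℝ) (ha : ContDiff ℝ 1 a) (hb : ContDiff ℝ 1 b)
    (hbpos : ∀ t, 0 < b t) :
    ∀ t x : ℝ,
      Filter.Tendsto
        (fun y =>
          (-(deriv (fun s => Nsq k ε n a b s x y) t) ^ 2 +
              (deriv (fun s => Nsq k ε n a b t s y) x) ^ 2 / (a t) ^ 2 +
              (deriv (fun s => Nsq k ε n a b t x s) y) ^ 2 /
                ((b t) ^ 2 * Real.exp (2 * ε * x))) /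
            (4 * Nsq k ε n a b t x y))
        (nhdsWithin 0 (Set.Ioi 0)) (nhds 1) := by
  intro t x
  have hSig : HasDerivAt (Sig k) 1 0 := SigDeriv_zero k ▸ hasDerivAt_Sig k 0
  have hSig_tendsto : Tendsto (Sig k) (𝓝[≠] 0) (𝓝 0) :=
    (Sig_zero k ▸ hSig.continuousAt.tendsto).mono_left nhdsWithin_le_nhds
  have hSigDeriv_tendsto : Tendsto (SigDeriv k) (𝓝[≠] 0) (𝓝 1) :=
    (SigDeriv_zero k ▸ (continuous_SigDeriv k).continuousAt.tendsto).mono_left nhdsWithin_le_nhds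
  have hratio : Tendsto (fun y => (Ffun k y + k) / Sig k y) (𝓝[≠] 0) (𝓝 0) := by
    simpa [Sig_zero] using tendsto_div_nhdsNE_of_hasDerivAt ((hasDerivAt_Ffun k 0).add_const k)
      hSig (Ffun_zero_add_eq_zero hk) (Sig_zero k) one_ne_zero
  have hq : b t ^ 2 * exp (2 * ε * x) ≠ 0 := (mul_pos (pow_pos (hbpos t) 2) (exp_pos _)).ne'
  simp only [fun y => (hasDerivAt_Nsq_t k ε n a b (ha.differentiable one_ne_zero t).hasDerivAt
      (hb.differentiable one_ne_zero t).hasDerivAt x y).deriv,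
    fun y => (hasDerivAt_Nsq_x k ε n a b t x y).deriv,
    fun y => (hasDerivAt_Nsq_y k ε n a b t x y).deriv]
  simp only [Nsq]
  exact (tendsto_regularity_quotient _ _ _ _ _ _ hq hSig_tendsto hSigDeriv_tendsto hratio
    (hSig.eventually_ne one_ne_zero)).mono_left (nhdsGT_le_nhdsNE 0)

/-- the axis `y = 0` is regular: for every fixed `(t,x)`,
`(∇N·∇N)/(4N) = (−(∂_t N)² + a⁻²(∂_x N)² + b⁻²e^{−2εx}(∂_y N)²)/(4N) → 1`
as `y → 0⁺`. -/
theorem axis_regularity (k ε n : ℝ)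
    (hk : k = -1 ∨ k = 0 ∨ k = 1) (hε : ε = 0 ∨ ε = 1) (hn : n = 0 ∨ n = 1)
    (hεn : ε * n = 0) (hεk : ε * k = 0)
    (a b : ℝ → ℝ) (ha : ContDiff ℝ 1 a) (hb : ContDiff ℝ 1 b)
    (hapos : ∀ t, 0 < a t) (hbpos : ∀ t, 0 < b t) :
    ∀ t x : ℝ,
      Filter.Tendsto
        (fun y =>
          (-(deriv (fun s => Nsq k ε n a b s x y) t) ^ 2 +
              (deriv (fun s => Nsq k ε n a b t s y) x) ^ 2 / (a t) ^ 2 +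
              (deriv (fun s => Nsq k ε n a b t x s) y) ^ 2 /
                ((b t) ^ 2 * Real.exp (2 * ε * x))) /
            (4 * Nsq k ε n a b t x y))
        (nhdsWithin 0 (Set.Ioi 0)) (nhds 1) :=
  axis_regularity_general k ε n hk a b ha hb hbpos
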